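/- arXiv:math/0609523 — 7 statements merged into one kernel-verified Lean document; each statement's English description precedes it below -/
import Mathlib

section
/- Let m ≥ 1 be an integer and put weights w(z₁) = 1, w(z₂) = w(z₃) = w(z₄) = m on the variables of ℂ[z₁,z₂,z₃,z₄]. Suppose f = f₀ + g, where f₀ is weighted homogeneous of weighted degree 2m, the only common zero in ℂ⁴ of the four partial derivatives of f₀ is the origin, and every monomial occurring in g has weighted degree strictly greater than 2m. Then there exists a ℂ-algebra automorphism φ of ℂ[z₁,z₂,z₃,z₄] such that φ(f) = z₁^{2m} + z₂² + z₃² + z₄² + g′, where every monomial occurring in g′ has weighted degree strictly greater than 2m. -/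
/-!
Put `u = (X 0 ^ m, X 1, …, X n)`. Every monomial of weighted degree `2m` is a product
`u i * u j`, so `f₀ = uᵀ A u` with `A` symmetric, and `∂f₀/∂X l = 2 (∂(u l)/∂X l) (A u) l`.
Hence a kernel vector of `A` (taking an `m`-th root in the first entry) yields a critical point,
and for `m ≥ 2` so does a kernel vector of the lower block `(A i j)_{i,j ≥ 1}` placed at
`X 0 = 0`, where `∂(u 0)/∂X 0 = m X 0 ^ (m - 1)` vanishes. The isolated singularity thus makes
both nonsingular, and over `ℂ` there is an `S` with `Sᵀ A S = 1` whose first row is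
`(s, 0, …, 0)` if `m ≥ 2`. The substitution `X 0 ↦ β X 0` (`β ^ m = s`), `X i ↦ (S u) i` acts on
`u` by `S` and is a weight-preserving automorphism, so it sends `f₀` to `∑ u i ^ 2` and keeps `g`
of weighted order `> 2m`. For `m = 1`, `u` is the vector of variables and `S` may be arbitrary.
-/

open MvPolynomial Matrix

namespace Matrix

section CommSemiring

variable {ι R : Type*} [Fintype ι] [CommSemiring R] {n : ℕ}

theorem transpose_mul_mul_apply (S A : Matrix ι ι R) (i j : ι) :
    (Sᵀ * A * S) i j = Sᵀ i ⬝ᵥ A *ᵥ Sᵀ j := by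
  rw [Matrix.mul_apply, dotProduct_mulVec, dotProduct]
  simp [vecMul, dotProduct, Matrix.mul_apply, Finset.sum_mul]

theorem IsSymm.dotProduct_mulVec_comm {A : Matrix ι ι R} (hA : A.IsSymm) (v w : ι → R) :
    v ⬝ᵥ A *ᵥ w = w ⬝ᵥ A *ᵥ v := by
  rw [dotProduct_mulVec, ← mulVec_transpose, hA.eq, dotProduct_comm]

theorem mulVec_vecCons_zero_succ (A : Matrix (Fin (n + 1)) (Fin (n + 1)) R) (w : Fin n → R)
    (j : Fin n) : (A *ᵥ vecCons 0 w) j.succ = (A.submatrix Fin.succ Fin.succ *ᵥ w) j := by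
  simp [mulVec, dotProduct, Fin.sum_univ_succ]

theorem vecCons_zero_dotProduct_mulVec (A : Matrix (Fin (n + 1)) (Fin (n + 1)) R)
    (v w : Fin n → R) :
    vecCons 0 v ⬝ᵥ A *ᵥ vecCons 0 w = v ⬝ᵥ A.submatrix Fin.succ Fin.succ *ᵥ w := by
  simp [cons_dotProduct, vecTail, Function.comp_def, mulVec_vecCons_zero_succ]

end CommSemiring

variable {ι K : Type*} [Fintype ι] [Field K] {n : ℕ}

theorem exists_transpose_mul_mul_eq_one [IsAlgClosed K] [Invertible (2 : K)] [DecidableEq ι]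
    {A : Matrix ι ι K} (hA : A.IsSymm) (hdet : A.det ≠ 0) :
    ∃ S : Matrix ι ι K, Sᵀ * A * S = 1 := by
  have hB : LinearMap.IsSymm (toBilin' A) :=
    ⟨fun v w => by simp [toBilin'_apply', hA.dotProduct_mulVec_comm v w]⟩
  obtain ⟨v, hv⟩ := LinearMap.BilinForm.exists_orthogonal_basis hB
  have hvv := hv.not_isOrtho_basis_self_of_separatingLeft
    (LinearMap.separatingLeft_toLinearMap₂'_of_det_ne_zero' hdet)
  let e : ι ≃ Fin (Module.finrank K (ι → K)) :=
    Fintype.equivFinOfCardEq (Module.finrank_fintype_fun_eq_card K).symm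
  choose r hr using fun i => IsAlgClosed.exists_eq_mul_self (toBilin' A (v (e i)) (v (e i)))⁻¹
  refine ⟨(of fun i => r i • v (e i))ᵀ, ?_⟩
  ext i j
  rw [transpose_mul_mul_apply, transpose_transpose]
  change (r i • v (e i)) ⬝ᵥ A *ᵥ (r j • v (e j)) = _
  rw [mulVec_smul, dotProduct_smul, smul_dotProduct, ← toBilin'_apply', smul_eq_mul, smul_eq_mul]
  by_cases hij : i = j
  · subst hij
    rw [one_apply_eq, ← mul_assoc, ← hr, inv_mul_cancel₀ (hvv _)]
  · rw [one_apply_ne hij, hv (e.injective.ne hij), mul_zero, mul_zero]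

theorem inv_apply_zero_of_apply_zero_succ {S : Matrix (Fin (n + 1)) (Fin (n + 1)) K}
    (hdet : S.det ≠ 0) (hS : ∀ k : Fin n, S 0 k.succ = 0) :
    S⁻¹ 0 = Pi.single 0 (S 0 0)⁻¹ := by
  have h00 : S 0 0 ≠ 0 := fun h =>
    hdet (det_eq_zero_of_row_eq_zero 0 (Fin.cases (motive := fun k => S 0 k = 0) h hS))
  ext j
  have hj := congrFun (congrFun (mul_nonsing_inv S (isUnit_iff_ne_zero.mpr hdet)) 0) j
  rw [mul_apply, Fin.sum_univ_succ] at hj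
  simp only [hS, zero_mul, Finset.sum_const_zero, add_zero] at hj
  rw [(eq_inv_mul_iff_mul_eq₀ h00).mpr hj]
  by_cases hj0 : j = 0 <;> simp [hj0, one_apply, eq_comm]

theorem exists_transpose_mul_mul_eq_one_of_submatrix [IsAlgClosed K] [Invertible (2 : K)]
    {A : Matrix (Fin (n + 1)) (Fin (n + 1)) K} (hA : A.IsSymm) (hdet : A.det ≠ 0)
    (hdet' : (A.submatrix Fin.succ Fin.succ).det ≠ 0) :
    ∃ S : Matrix (Fin (n + 1)) (Fin (n + 1)) K,
      (∀ k : Fin n, S 0 k.succ = 0) ∧ Sᵀ * A * S = 1 := by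
  obtain ⟨T, hT⟩ := exists_transpose_mul_mul_eq_one (hA.submatrix Fin.succ) hdet'
  set v := A⁻¹ *ᵥ Pi.single 0 1
  have hv : A *ᵥ v = Pi.single 0 1 := by
    rw [mulVec_mulVec, mul_nonsing_inv _ (isUnit_iff_ne_zero.mpr hdet), one_mulVec]
  have hv0 : v 0 ≠ 0 := by
    intro h0
    have hcons : v = vecCons 0 (vecTail v) := by rw [← h0]; exact (cons_head_tail v).symm
    have htail : A.submatrix Fin.succ Fin.succ *ᵥ vecTail v = 0 := by
      ext j
      rw [← mulVec_vecCons_zero_succ, ← hcons, hv]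
      simp
    have hzero : vecTail v = 0 := by
      by_contra hne
      exact hdet' (exists_mulVec_eq_zero_iff.mp ⟨_, hne, htail⟩)
    rw [hcons, hzero, cons_zero_zero, mulVec_zero] at hv
    simpa using congrFun hv 0
  obtain ⟨s, hs⟩ := IsAlgClosed.exists_eq_mul_self (v 0)⁻¹
  have hvA : ∀ w : Fin n → K, vecCons 0 w ⬝ᵥ A *ᵥ v = 0 := by
    intro w
    rw [hv, dotProduct_single]
    simp
  -- Columns of `S`: `s • A⁻¹ e₀`, which is `A`-orthogonal to every vector with first entry `0`,
  -- followed by the columns of `T` with a `0` put in front.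
  let c : Fin (n + 1) → Fin (n + 1) → K := vecCons (s • v) fun j => vecCons 0 (Tᵀ j)
  refine ⟨(of c)ᵀ, fun k => rfl, ?_⟩
  ext k l
  rw [transpose_mul_mul_apply, transpose_transpose]
  change c k ⬝ᵥ A *ᵥ c l = _
  induction k using Fin.cases <;> induction l using Fin.cases <;>
    simp only [c, cons_val_zero, cons_val_succ]
  · rw [mulVec_smul, dotProduct_smul, smul_dotProduct, hv, dotProduct_single, one_apply_eq,
      smul_eq_mul, smul_eq_mul, mul_one, ← mul_assoc, ← hs, inv_mul_cancel₀ hv0]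
  · rw [hA.dotProduct_mulVec_comm, mulVec_smul, dotProduct_smul, hvA, smul_zero,
      one_apply_ne (Fin.succ_ne_zero _).symm]
  · rw [mulVec_smul, dotProduct_smul, hvA, smul_zero, one_apply_ne (Fin.succ_ne_zero _)]
  · rw [vecCons_zero_dotProduct_mulVec, ← transpose_mul_mul_apply, hT]
    simp only [one_apply, Fin.succ_inj]

end Matrix

theorem Finsupp.exists_eq_single_add_single_of_degree_eq_two {ι : Type*} [DecidableEq ι]
    {c : ι →₀ ℕ} (hc : c.degree = 2) : ∃ i j, c = single i 1 + single j 1 := by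
  obtain ⟨i, j, hij⟩ := Multiset.card_eq_two.mp ((card_toMultiset c).trans hc)
  refine ⟨i, j, ?_⟩
  rw [toMultiset_eq_iff.mp hij, Multiset.insert_eq_cons, ← Multiset.singleton_add,
    Multiset.toFinsupp_add, Multiset.toFinsupp_singleton, Multiset.toFinsupp_singleton]

namespace MvPolynomial

section Weights

variable {σ τ R M : Type*} [CommSemiring R] [AddCommMonoid M] {w : σ → M} {w' : τ → M}

theorem isWeightedHomogeneous_aeval_monomial {f : σ → MvPolynomial τ R}
    (hf : ∀ i, IsWeightedHomogeneous w' (f i) (w i)) (d : σ →₀ ℕ) (c : R) :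
    IsWeightedHomogeneous w' (aeval f (monomial d c)) (Finsupp.weight w d) := by
  rw [aeval_monomial, algebraMap_eq, Finsupp.weight_apply, Finsupp.sum, Finsupp.prod]
  exact (IsWeightedHomogeneous.prod _ _ _ fun i _ => (hf i).pow (d i)).C_mul c

theorem exists_mem_support_weight_eq_of_mem_support_map
    (φ : MvPolynomial σ R →ₐ[R] MvPolynomial τ R)
    (hφ : ∀ i, IsWeightedHomogeneous w' (φ (X i)) (w i)) (p : MvPolynomial σ R)
    {e : τ →₀ ℕ} (he : e ∈ (φ p).support) :
    ∃ d ∈ p.support, Finsupp.weight w' e = Finsupp.weight w d := by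
  classical
  rw [aeval_unique φ, p.as_sum, map_sum] at he
  obtain ⟨d, hd, hed⟩ := Finset.mem_biUnion.mp (support_sum he)
  exact ⟨d, hd, isWeightedHomogeneous_aeval_monomial hφ d _ (mem_support_iff.mp hed)⟩

theorem isWeightedHomogeneous_mulVec_map_C {ι : Type*} [Fintype ι] {k : M}
    {V : ι → MvPolynomial σ R} (hV : ∀ j, IsWeightedHomogeneous w (V j) k)
    (S : Matrix ι ι R) (i : ι) : IsWeightedHomogeneous w ((S.map C *ᵥ V) i) k :=
  IsWeightedHomogeneous.sum _ _ _ fun j _ => (hV j).C_mul (S i j)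

end Weights

section Substitution

variable {ι σ τ R : Type*} [Fintype ι] [CommSemiring R]

theorem map_mulVec_map_C (φ : MvPolynomial σ R →ₐ[R] MvPolynomial τ R) (M : Matrix ι ι R)
    (V : ι → MvPolynomial σ R) (i : ι) :
    φ ((M.map C *ᵥ V) i) = (M.map C *ᵥ (⇑φ ∘ V)) i := by
  simp [mulVec, dotProduct, algHom_C]

theorem exists_algEquiv_eq_aeval (f g : σ → MvPolynomial σ R) (hfg : ∀ i, aeval f (g i) = X i)
    (hgf : ∀ i, aeval g (f i) = X i) :
    ∃ φ : MvPolynomial σ R ≃ₐ[R] MvPolynomial σ R, ∀ p, φ p = aeval f p :=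
  ⟨.ofAlgHom (aeval f) (aeval g)
    (algHom_ext fun i => by rw [AlgHom.comp_apply, aeval_X, hfg, AlgHom.id_apply])
    (algHom_ext fun i => by rw [AlgHom.comp_apply, aeval_X, hgf, AlgHom.id_apply]), fun _ => rfl⟩

theorem aeval_mulVec_map_C_X [DecidableEq ι] (S T : Matrix ι ι R) (i : ι) :
    aeval (S.map C *ᵥ X) ((T.map C *ᵥ X) i) = ((T * S).map C *ᵥ X) i := by
  rw [map_mulVec_map_C]
  simp [Function.comp_def, Matrix.map_mul, ← mulVec_mulVec]

end Substitution

theorem exists_algEquiv_mulVec_map_C {ι R : Type*} [Fintype ι] [DecidableEq ι] [CommRing R]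
    (S : Matrix ι ι R) (hS : IsUnit S.det) :
    ∃ φ : MvPolynomial ι R ≃ₐ[R] MvPolynomial ι R,
      ∀ p, φ p = aeval (S.map C *ᵥ X) p := by
  refine exists_algEquiv_eq_aeval _ (S⁻¹.map C *ᵥ X) (fun i => ?_) (fun i => ?_)
  · rw [aeval_mulVec_map_C_X, nonsing_inv_mul _ hS, Matrix.map_one _ C_0 C_1, one_mulVec]
  · rw [aeval_mulVec_map_C_X, mul_nonsing_inv _ hS, Matrix.map_one _ C_0 C_1, one_mulVec]

section QuadForm

variable {ι σ R : Type*} [Fintype ι] [CommSemiring R]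

noncomputable def quadForm (A : Matrix ι ι R) (U : ι → MvPolynomial σ R) :
    MvPolynomial σ R :=
  U ⬝ᵥ A.map C *ᵥ U

variable (U : ι → MvPolynomial σ R)

theorem quadForm_zero : quadForm 0 U = 0 := by
  simp [quadForm]

theorem quadForm_add (A B : Matrix ι ι R) :
    quadForm (A + B) U = quadForm A U + quadForm B U := by
  simp [quadForm, Matrix.map_add, add_mulVec, dotProduct_add]

theorem quadForm_smul (c : R) (A : Matrix ι ι R) : quadForm (c • A) U = C c * quadForm A U := by
  simp [quadForm, Matrix.map_smul', smul_mulVec, dotProduct_smul]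

theorem quadForm_transpose (A : Matrix ι ι R) : quadForm Aᵀ U = quadForm A U := by
  rw [quadForm, quadForm, transpose_map, mulVec_transpose, dotProduct_comm, dotProduct_mulVec]

theorem quadForm_single [DecidableEq ι] (i j : ι) (c : R) :
    quadForm (Matrix.single i j c) U = C c * U i * U j := by
  rw [quadForm, map_single, single_mulVec, ← Pi.single, dotProduct_single]
  ring

theorem quadForm_one [DecidableEq ι] : quadForm 1 U = ∑ i, U i ^ 2 := by
  simp [quadForm, Matrix.map_one _ C_0 C_1, dotProduct, sq]

theorem exists_isSymm_quadForm_eq [Invertible (2 : R)] (B : Matrix ι ι R) :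
    ∃ A : Matrix ι ι R, A.IsSymm ∧ quadForm A U = quadForm B U := by
  refine ⟨⅟(2 : R) • (B + Bᵀ), ?_, ?_⟩
  · simp [IsSymm, transpose_add, add_comm]
  · rw [quadForm_smul, quadForm_add, quadForm_transpose, ← two_mul, ← mul_assoc,
      ← map_ofNat C 2, ← C_mul, invOf_mul_self, C_1, one_mul]

theorem exists_quadForm_eq [DecidableEq ι] (p : MvPolynomial σ R)
    (hp : ∀ d ∈ p.support, ∃ i j, monomial d 1 = U i * U j) :
    ∃ B : Matrix ι ι R, quadForm B U = p := by
  rw [p.as_sum]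
  refine Finset.sum_induction _ (fun q => ∃ B, quadForm B U = q)
    (fun _ _ ⟨A, hA⟩ ⟨B, hB⟩ => ⟨A + B, by rw [quadForm_add, hA, hB]⟩)
    ⟨0, quadForm_zero U⟩ ?_
  intro d hd
  obtain ⟨i, j, hij⟩ := hp d hd
  exact ⟨Matrix.single i j (coeff d p),
    by rw [quadForm_single, mul_assoc, ← hij, C_mul_monomial, mul_one]⟩

theorem map_quadForm {τ : Type*} (φ : MvPolynomial σ R →ₐ[R] MvPolynomial τ R)
    (A S : Matrix ι ι R) (V : ι → MvPolynomial τ R)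
    (hφ : ∀ i, φ (U i) = (S.map C *ᵥ V) i) :
    φ (quadForm A U) = quadForm (Sᵀ * A * S) V := by
  have hU : ⇑φ ∘ U = S.map C *ᵥ V := _root_.funext hφ
  have hAU : ⇑φ ∘ (A.map C *ᵥ U) = A.map C *ᵥ (S.map C *ᵥ V) := by
    ext i : 1
    have hA : A.map (⇑φ ∘ C) = A.map C := by ext; simp [algHom_C]
    simpa [hA, ← hU] using RingHom.map_mulVec φ.toRingHom (A.map C) U i
  rw [quadForm, quadForm, ← φ.coe_toRingHom, RingHom.map_dotProduct, φ.coe_toRingHom, hU, hAU,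
    Matrix.map_mul, Matrix.map_mul, transpose_map, ← mulVec_mulVec, ← mulVec_mulVec,
    dotProduct_mulVec V, vecMul_transpose]

theorem eval_pderiv_quadForm {A : Matrix ι ι R} (hA : A.IsSymm) (z : σ → R) (l : σ) :
    eval z (pderiv l (quadForm A U)) =
      2 * ((fun i => eval z (pderiv l (U i))) ⬝ᵥ A *ᵥ fun i => eval z (U i)) := by
  have hswap : ∑ i, eval z (U i) * ∑ j, A i j * eval z (pderiv l (U j)) =
      ∑ i, eval z (pderiv l (U i)) * ∑ j, A i j * eval z (U j) := by
    simp only [Finset.mul_sum]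
    rw [Finset.sum_comm]
    refine Finset.sum_congr rfl fun i _ => Finset.sum_congr rfl fun j _ => ?_
    rw [hA.apply i j]
    ring
  simp only [quadForm, dotProduct, mulVec, Matrix.map_apply, map_sum, Derivation.leibniz,
    pderiv_C, smul_eq_mul, eval_mul, eval_add, eval_C, mul_zero, add_zero, Finset.sum_add_distrib]
  rw [hswap, two_mul]
  simp only [mul_comm]

end QuadForm

section Sqh

variable {n : ℕ}

def sqhWeight (m : ℕ) (i : Fin (n + 1)) : ℕ := if i = 0 then 1 else m

def sqhExp (m : ℕ) (i : Fin (n + 1)) : ℕ := if i = 0 then m else 1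

noncomputable def sqhBasis (R : Type*) [CommSemiring R] (m : ℕ) (i : Fin (n + 1)) :
    MvPolynomial (Fin (n + 1)) R :=
  X i ^ sqhExp m i

theorem weight_sqhWeight (m : ℕ) (d : Fin (n + 1) →₀ ℕ) :
    Finsupp.weight (sqhWeight m) d = d 0 + m * ∑ i : Fin n, d i.succ := by
  simp [Finsupp.weight_apply, Finsupp.sum_fintype, Fin.sum_univ_succ, sqhWeight, Finset.mul_sum,
    mul_comm]

theorem sqhExp_mul_sqhWeight (m : ℕ) (i : Fin (n + 1)) : sqhExp m i * sqhWeight m i = m := by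
  by_cases hi : i = 0 <;> simp [sqhExp, sqhWeight, hi]

theorem sqhExp_pos {m : ℕ} (hm : 1 ≤ m) (i : Fin (n + 1)) : 0 < sqhExp m i := by
  by_cases hi : i = 0 <;> simp [sqhExp, hi]
  omega

variable {R : Type*} [CommSemiring R] {m : ℕ}

theorem sqhBasis_one : sqhBasis R 1 = (X : Fin (n + 1) → MvPolynomial (Fin (n + 1)) R) := by
  ext1 i
  by_cases hi : i = 0 <;> simp [sqhBasis, sqhExp, hi]

theorem isWeightedHomogeneous_sqhBasis (i : Fin (n + 1)) :
    IsWeightedHomogeneous (sqhWeight m) (sqhBasis R m i) m := by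
  simpa [sqhBasis, sqhExp_mul_sqhWeight] using
    (isWeightedHomogeneous_X R (sqhWeight m) i).pow (sqhExp m i)

theorem exists_monomial_eq_sqhBasis_mul (hm : 1 ≤ m) {d : Fin (n + 1) →₀ ℕ}
    (hd : Finsupp.weight (sqhWeight m) d = 2 * m) :
    ∃ i j, monomial d (1 : R) = sqhBasis R m i * sqhBasis R m j := by
  rw [weight_sqhWeight] at hd
  set s := ∑ i : Fin n, d i.succ
  have hs : s ≤ 2 := by
    by_contra! hs
    nlinarith
  have hd0 : d 0 = (2 - s) * m := by
    rw [Nat.sub_mul, mul_comm s]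
    omega
  obtain ⟨i, j, hij⟩ := Finsupp.exists_eq_single_add_single_of_degree_eq_two
    (c := d.update 0 (2 - s)) (by
      rw [Finsupp.degree_eq_sum, Fin.sum_univ_succ]
      simp [Finsupp.update_apply, Fin.succ_ne_zero]
      omega)
  have hdc : ∀ k, d k = (d.update 0 (2 - s)) k * sqhExp m k := by
    intro k
    by_cases hk : k = 0 <;> simp [Finsupp.update_apply, sqhExp, hk, hd0]
  refine ⟨i, j, ?_⟩
  rw [sqhBasis, sqhBasis, X_pow_eq_monomial, X_pow_eq_monomial, monomial_mul, mul_one]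
  refine congrArg (monomial · 1) (Finsupp.ext fun k => ?_)
  rw [hdc, hij]
  simp only [Finsupp.add_apply, Finsupp.single_apply, add_mul]
  split_ifs <;> simp_all

theorem eval_pderiv_sqhBasis (z : Fin (n + 1) → R) (l : Fin (n + 1)) :
    (fun i => eval z (pderiv l (sqhBasis R m i))) =
      Pi.single l (sqhExp m l * z l ^ (sqhExp m l - 1)) := by
  ext i
  rw [sqhBasis, Derivation.leibniz_pow, pderiv_X]
  by_cases hi : i = l
  · subst hi; simp
  · simp [hi]

theorem exists_isSymm_quadForm_sqhBasis_eq [Invertible (2 : R)] (hm : 1 ≤ m)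
    {f : MvPolynomial (Fin (n + 1)) R} (hf : IsWeightedHomogeneous (sqhWeight m) f (2 * m)) :
    ∃ A : Matrix (Fin (n + 1)) (Fin (n + 1)) R, A.IsSymm ∧ quadForm A (sqhBasis R m) = f := by
  obtain ⟨B, hB⟩ := exists_quadForm_eq (sqhBasis R m) f fun d hd =>
    exists_monomial_eq_sqhBasis_mul hm (hf (mem_support_iff.mp hd))
  obtain ⟨A, hA, hAB⟩ := exists_isSymm_quadForm_eq (sqhBasis R m) B
  exact ⟨A, hA, hAB.trans hB⟩

theorem eval_pderiv_quadForm_sqhBasis {A : Matrix (Fin (n + 1)) (Fin (n + 1)) R} (hA : A.IsSymm)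
    (z : Fin (n + 1) → R) (l : Fin (n + 1)) :
    eval z (pderiv l (quadForm A (sqhBasis R m))) =
      2 * (sqhExp m l * z l ^ (sqhExp m l - 1) * (A *ᵥ fun i => z i ^ sqhExp m i) l) := by
  rw [eval_pderiv_quadForm _ hA, eval_pderiv_sqhBasis, single_dotProduct]
  simp [sqhBasis]

noncomputable def sqhSubst (m : ℕ) (β : R) (S : Matrix (Fin (n + 1)) (Fin (n + 1)) R)
    (i : Fin (n + 1)) : MvPolynomial (Fin (n + 1)) R :=
  if i = 0 then C β * X 0 else (S.map C *ᵥ sqhBasis R m) i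

section SqhSubst

variable {β : R} {S : Matrix (Fin (n + 1)) (Fin (n + 1)) R}

theorem isWeightedHomogeneous_sqhSubst (i : Fin (n + 1)) :
    IsWeightedHomogeneous (sqhWeight m) (sqhSubst m β S i) (sqhWeight m i) := by
  cases i using Fin.cases with
  | zero => simpa [sqhSubst, sqhWeight] using (isWeightedHomogeneous_X R (sqhWeight m) 0).C_mul β
  | succ i =>
    simpa [sqhSubst, sqhWeight, Fin.succ_ne_zero] using
      isWeightedHomogeneous_mulVec_map_C isWeightedHomogeneous_sqhBasis S i.succ

theorem sqhSubst_one_one :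
    sqhSubst m (1 : R) (1 : Matrix (Fin (n + 1)) (Fin (n + 1)) R) = X := by
  ext1 i
  cases i using Fin.cases <;>
    simp [sqhSubst, Matrix.map_one _ C_0 C_1, sqhBasis, sqhExp, Fin.succ_ne_zero]

theorem aeval_sqhSubst_sqhBasis (hβ : β ^ m = S 0 0) (hS : ∀ k : Fin n, S 0 k.succ = 0)
    (i : Fin (n + 1)) :
    aeval (sqhSubst m β S) (sqhBasis R m i) = (S.map C *ᵥ sqhBasis R m) i := by
  cases i using Fin.cases with
  | zero =>
    have hrow : (S.map C *ᵥ sqhBasis R m) 0 = C (S 0 0) * X 0 ^ m := by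
      simp [mulVec, dotProduct, Fin.sum_univ_succ, hS, sqhBasis, sqhExp]
    rw [hrow, sqhBasis, sqhExp, if_pos rfl, map_pow, aeval_X, sqhSubst, if_pos rfl, mul_pow,
      ← C_pow, hβ]
  | succ i =>
    rw [sqhBasis, sqhExp, if_neg (Fin.succ_ne_zero i), pow_one, aeval_X, sqhSubst,
      if_neg (Fin.succ_ne_zero i)]

theorem aeval_sqhSubst_sqhSubst (hβ : β ^ m = S 0 0) (hS : ∀ k : Fin n, S 0 k.succ = 0) (γ : R)
    (T : Matrix (Fin (n + 1)) (Fin (n + 1)) R) (i : Fin (n + 1)) :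
    aeval (sqhSubst m β S) (sqhSubst m γ T i) = sqhSubst m (γ * β) (T * S) i := by
  cases i using Fin.cases with
  | zero =>
    simp only [sqhSubst, ↓reduceIte]
    rw [map_mul, aeval_C, aeval_X, sqhSubst, if_pos rfl, algebraMap_eq, ← mul_assoc, C_mul]
  | succ i =>
    simp only [sqhSubst, if_neg (Fin.succ_ne_zero i)]
    have hU : ⇑(aeval (sqhSubst m β S)) ∘ sqhBasis R m = S.map C *ᵥ sqhBasis R m :=
      _root_.funext (aeval_sqhSubst_sqhBasis hβ hS)
    rw [map_mulVec_map_C, hU, mulVec_mulVec, Matrix.map_mul]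

end SqhSubst

variable {K : Type*} [Field K] {A : Matrix (Fin (n + 1)) (Fin (n + 1)) K}

theorem det_ne_zero_of_isolated [IsAlgClosed K] (hm : 1 ≤ m) (hA : A.IsSymm)
    (hiso : ∀ z, (∀ i, eval z (pderiv i (quadForm A (sqhBasis K m))) = 0) → z = 0) :
    A.det ≠ 0 := by
  intro hdet
  obtain ⟨v, hv, hAv⟩ := exists_mulVec_eq_zero_iff.mpr hdet
  choose z hz using fun i => IsAlgClosed.exists_pow_nat_eq (v i) (sqhExp_pos hm i)
  have hzv : (fun i => z i ^ sqhExp m i) = v := _root_.funext hz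
  have hz0 : z = 0 := hiso z fun l => by rw [eval_pderiv_quadForm_sqhBasis hA, hzv, hAv]; simp
  refine hv (_root_.funext fun i => ?_)
  rw [← hz, hz0, Pi.zero_apply, zero_pow (sqhExp_pos hm i).ne']

theorem det_submatrix_ne_zero_of_isolated (hm : 2 ≤ m) (hA : A.IsSymm)
    (hiso : ∀ z, (∀ i, eval z (pderiv i (quadForm A (sqhBasis K m))) = 0) → z = 0) :
    (A.submatrix Fin.succ Fin.succ).det ≠ 0 := by
  intro hdet
  obtain ⟨w, hw, hAw⟩ := exists_mulVec_eq_zero_iff.mpr hdet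
  have hu : (fun i => vecCons 0 w i ^ sqhExp m i) = vecCons (0 : K) w := by
    ext i
    cases i using Fin.cases <;> simp [sqhExp]
    omega
  have hz0 := hiso (vecCons 0 w) fun l => by
    rw [eval_pderiv_quadForm_sqhBasis hA, hu]
    cases l using Fin.cases
    · simp [sqhExp]
      omega
    · simp [mulVec_vecCons_zero_succ, hAw]
  exact hw (_root_.funext fun i => by simpa using congrFun hz0 i.succ)

theorem exists_algEquiv_sqhSubst [IsAlgClosed K] (hm : 1 ≤ m)
    {S : Matrix (Fin (n + 1)) (Fin (n + 1)) K} (hdet : S.det ≠ 0)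
    (hS : ∀ k : Fin n, S 0 k.succ = 0) :
    ∃ φ : MvPolynomial (Fin (n + 1)) K ≃ₐ[K] MvPolynomial (Fin (n + 1)) K,
      (∀ i, φ (sqhBasis K m i) = (S.map C *ᵥ sqhBasis K m) i) ∧
        ∀ i, IsWeightedHomogeneous (sqhWeight m) (φ (X i)) (sqhWeight m i) := by
  have hinv := inv_apply_zero_of_apply_zero_succ hdet hS
  have hS' : ∀ k : Fin n, S⁻¹ 0 k.succ = 0 := fun k => by
    rw [hinv, Pi.single_eq_of_ne (Fin.succ_ne_zero k)]
  have hunit := isUnit_iff_ne_zero.mpr hdet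
  obtain ⟨β, hβ⟩ := IsAlgClosed.exists_pow_nat_eq (S 0 0) hm
  have hβ0 : β ≠ 0 := by
    rintro rfl
    refine hdet (det_eq_zero_of_row_eq_zero 0 (Fin.cases ?_ hS))
    rw [← hβ, zero_pow (by omega)]
  have hβ' : β⁻¹ ^ m = S⁻¹ 0 0 := by rw [inv_pow, hβ, hinv, Pi.single_eq_same]
  obtain ⟨φ, hφ⟩ := exists_algEquiv_eq_aeval (sqhSubst m β S) (sqhSubst m β⁻¹ S⁻¹)
    (fun i => by
      rw [aeval_sqhSubst_sqhSubst hβ hS, inv_mul_cancel₀ hβ0, nonsing_inv_mul _ hunit,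
        sqhSubst_one_one])
    (fun i => by
      rw [aeval_sqhSubst_sqhSubst hβ' hS', mul_inv_cancel₀ hβ0, mul_nonsing_inv _ hunit,
        sqhSubst_one_one])
  exact ⟨φ, fun i => by rw [hφ, aeval_sqhSubst_sqhBasis hβ hS],
    fun i => by rw [hφ, aeval_X]; exact isWeightedHomogeneous_sqhSubst i⟩

theorem exists_algEquiv_quadForm_sqhBasis_eq_one [IsAlgClosed K] [Invertible (2 : K)]
    (hm : 1 ≤ m) (hA : A.IsSymm) (hdet : A.det ≠ 0)
    (hdet' : 2 ≤ m → (A.submatrix Fin.succ Fin.succ).det ≠ 0) :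
    ∃ φ : MvPolynomial (Fin (n + 1)) K ≃ₐ[K] MvPolynomial (Fin (n + 1)) K,
      φ (quadForm A (sqhBasis K m)) = quadForm 1 (sqhBasis K m) ∧
        ∀ i, IsWeightedHomogeneous (sqhWeight m) (φ (X i)) (sqhWeight m i) := by
  suffices ∃ S : Matrix (Fin (n + 1)) (Fin (n + 1)) K, Sᵀ * A * S = 1 ∧
      ∃ φ : MvPolynomial (Fin (n + 1)) K ≃ₐ[K] MvPolynomial (Fin (n + 1)) K,
        (∀ i, φ (sqhBasis K m i) = (S.map C *ᵥ sqhBasis K m) i) ∧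
          ∀ i, IsWeightedHomogeneous (sqhWeight m) (φ (X i)) (sqhWeight m i) by
    obtain ⟨S, hS, φ, hφU, hφX⟩ := this
    exact ⟨φ, by rw [← hS]; exact map_quadForm _ φ.toAlgHom A S _ hφU, hφX⟩
  rcases hm.eq_or_lt with rfl | hm2
  · obtain ⟨S, hS⟩ := exists_transpose_mul_mul_eq_one hA hdet
    obtain ⟨φ, hφ⟩ := exists_algEquiv_mulVec_map_C S (isUnit_det_of_left_inverse hS)
    refine ⟨S, hS, φ, fun i => by simp [sqhBasis_one, hφ], fun i => ?_⟩
    have hX (j : Fin (n + 1)) :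
        IsWeightedHomogeneous (sqhWeight 1) (X j : MvPolynomial _ K) 1 := by
      simpa [sqhWeight] using isWeightedHomogeneous_X K (sqhWeight 1) j
    rw [hφ, aeval_X]
    simpa [sqhWeight] using isWeightedHomogeneous_mulVec_map_C hX S i
  · obtain ⟨S, hS0, hS⟩ := exists_transpose_mul_mul_eq_one_of_submatrix hA hdet (hdet' hm2)
    exact ⟨S, hS, exists_algEquiv_sqhSubst hm (isUnit_det_of_left_inverse hS).ne_zero hS0⟩

end Sqh

end MvPolynomial

/-- Reduction lemma for semiquasihomogeneous polynomials: with weights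
`w(z₁) = 1`, `w(z₂) = w(z₃) = w(z₄) = m`, if `f = f₀ + g` where `f₀` is
weighted homogeneous of weighted degree `2m` with an isolated singularity at
the origin and every monomial of `g` has weighted degree `> 2m`, then after a
`ℂ`-algebra automorphism of `ℂ[z₁,z₂,z₃,z₄]` the polynomial becomes
`z₁^{2m} + z₂² + z₃² + z₄²` plus terms of weighted degree `> 2m`. -/
theorem semiquasihomogeneous_reduction (m : ℕ) (hm : 1 ≤ m)
    (f f₀ g : MvPolynomial (Fin 4) ℂ)
    (hf : f = f₀ + g)
    (hf₀ : ∀ d ∈ f₀.support, d 0 + m * (d 1 + d 2 + d 3) = 2 * m)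
    (hiso : ∀ z : Fin 4 → ℂ, (∀ i : Fin 4, eval z (pderiv i f₀) = 0) → z = 0)
    (hg : ∀ d ∈ g.support, d 0 + m * (d 1 + d 2 + d 3) > 2 * m) :
    ∃ φ : MvPolynomial (Fin 4) ℂ ≃ₐ[ℂ] MvPolynomial (Fin 4) ℂ,
      ∃ g' : MvPolynomial (Fin 4) ℂ,
        φ f = X 0 ^ (2 * m) + X 1 ^ 2 + X 2 ^ 2 + X 3 ^ 2 + g' ∧
        ∀ d ∈ g'.support, d 0 + m * (d 1 + d 2 + d 3) > 2 * m := by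
  have hw (d : Fin 4 →₀ ℕ) :
      Finsupp.weight (sqhWeight m) d = d 0 + m * (d 1 + d 2 + d 3) := by
    simp [weight_sqhWeight, Fin.sum_univ_three]
  obtain ⟨A, hA, rfl⟩ := exists_isSymm_quadForm_sqhBasis_eq hm
    fun d hd => (hw d).trans (hf₀ d (mem_support_iff.mpr hd))
  obtain ⟨φ, hφA, hφX⟩ := exists_algEquiv_quadForm_sqhBasis_eq_one hm hA
    (det_ne_zero_of_isolated hm hA hiso) fun hm2 => det_submatrix_ne_zero_of_isolated hm2 hA hiso
  refine ⟨φ, φ g, ?_, fun d hd => ?_⟩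
  · rw [hf, map_add, hφA, quadForm_one, Fin.sum_univ_four]
    simp [sqhBasis, sqhExp, ← pow_mul, mul_comm]
  · obtain ⟨e, he, hde⟩ :=
      exists_mem_support_weight_eq_of_mem_support_map φ.toAlgHom hφX g hd
    rw [← hw, hde, hw]
    exact hg e he
end

section
/- Let Q be a symmetric 2×2 integer matrix with Q₁₁ = d. Suppose there exist coprime integers m, n such that the row vector (m, n) annihilates Q, i.e. m·Q₁₁ + n·Q₂₁ = 0 and m·Q₁₂ + n·Q₂₂ = 0. Then n² divides d. -/
theorem Matrix.IsSymm.sq_mul_apply_zero_zero_eq {R : Type*} [CommRing R]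
    {Q : Matrix (Fin 2) (Fin 2) R} (hQ : Q.IsSymm) {m n : R}
    (h1 : m * Q 0 0 + n * Q 1 0 = 0) (h2 : m * Q 0 1 + n * Q 1 1 = 0) :
    m ^ 2 * Q 0 0 = n ^ 2 * Q 1 1 := by
  linear_combination m * h1 - n * h2 - m * n * hQ.apply 0 1

/-- If `Q` is a symmetric `2 × 2` integer matrix with `Q₁₁ = d` and the row
vector `(m, n)` with `m, n` coprime annihilates `Q`, then `n²` divides `d`. -/
theorem radical_vector_sq_divides (d m n : ℤ)
    (Q : Matrix (Fin 2) (Fin 2) ℤ) (hsym : Q.IsSymm)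
    (h11 : Q 0 0 = d) (hmn : IsCoprime m n)
    (h1 : m * Q 0 0 + n * Q 1 0 = 0)
    (h2 : m * Q 0 1 + n * Q 1 1 = 0) :
    n ^ 2 ∣ d := by
  have key : m ^ 2 * d = n ^ 2 * Q 1 1 := h11 ▸ hsym.sq_mul_apply_zero_zero_eq h1 h2
  exact hmn.pow.symm.dvd_of_dvd_mul_left ⟨Q 1 1, key⟩
end

section
/- Let d be a nonzero square-free integer and let Q be a symmetric 2×2 integer matrix with Q₁₁ = d. Suppose there exist coprime integers m, n such that the row vector (m, n) annihilates Q, i.e. m·Q₁₁ + n·Q₂₁ = 0 and m·Q₁₂ + n·Q₂₂ = 0. Then n = ±1, and there exists an integer matrix U with det U = ±1 such that Uᵀ·Q·U = [[d, 0], [0, 0]]. -/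
/-!
Symmetry turns the two radical equations into `m² d = n² Q₁₁`; as `m` and `n` are coprime,
`n² ∣ d`, so `n` is a unit because `d` is square-free. The matrix with columns `e₁` and
`(m, n)` then has determinant `n = ±1`, and in this basis `e₁` pairs to `d` with itself
while `(m, n)` pairs to zero with everything.
-/

section RadicalVector

variable {R : Type*} [CommRing R] {Q : Matrix (Fin 2) (Fin 2) R} {m n : R}

theorem sq_mul_eq_sq_mul_of_radical (hsym : Q.IsSymm)
    (h1 : m * Q 0 0 + n * Q 1 0 = 0) (h2 : m * Q 0 1 + n * Q 1 1 = 0) :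
    m ^ 2 * Q 0 0 = n ^ 2 * Q 1 1 := by
  have hQ : Q 1 0 = Q 0 1 := hsym.apply 0 1
  linear_combination m * h1 - n * h2 - m * n * hQ

theorem transpose_mul_mul_eq_of_radical (hsym : Q.IsSymm)
    (h1 : m * Q 0 0 + n * Q 1 0 = 0) (h2 : m * Q 0 1 + n * Q 1 1 = 0) :
    (!![1, m; 0, n] : Matrix (Fin 2) (Fin 2) R).transpose * Q * !![1, m; 0, n] =
      !![Q 0 0, 0; 0, 0] := by
  have hQ : Q 1 0 = Q 0 1 := hsym.apply 0 1
  ext i j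
  fin_cases i <;> fin_cases j <;>
    simp [Matrix.mul_apply, Fin.sum_univ_two]
  · linear_combination h1 - n * hQ
  · linear_combination h1
  · linear_combination m * h1 + n * h2

end RadicalVector

theorem isUnit_of_squarefree_of_sq_mul_eq {R : Type*} [CommRing R] {a b c d : R}
    (hab : IsCoprime a b) (hd : Squarefree d) (h : a ^ 2 * d = b ^ 2 * c) : IsUnit b :=
  hd b <| by
    rw [← sq]
    exact hab.symm.pow.dvd_of_dvd_mul_left ⟨c, h⟩

theorem radical_vector_normalization_general (d m n : ℤ)
    (hsf : Squarefree d)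
    (Q : Matrix (Fin 2) (Fin 2) ℤ) (hsym : Q.IsSymm)
    (h11 : Q 0 0 = d) (hmn : IsCoprime m n)
    (h1 : m * Q 0 0 + n * Q 1 0 = 0)
    (h2 : m * Q 0 1 + n * Q 1 1 = 0) :
    (n = 1 ∨ n = -1) ∧
      ∃ U : Matrix (Fin 2) (Fin 2) ℤ,
        (U.det = 1 ∨ U.det = -1) ∧ U.transpose * Q * U = !![d, 0; 0, 0] := by
  subst h11
  have hn : n = 1 ∨ n = -1 := Int.isUnit_iff.mp <|
    isUnit_of_squarefree_of_sq_mul_eq hmn hsf (sq_mul_eq_sq_mul_of_radical hsym h1 h2)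
  refine ⟨hn, !![1, m; 0, n], ?_, transpose_mul_mul_eq_of_radical hsym h1 h2⟩
  simpa [Matrix.det_fin_two_of] using hn

/-- If `Q` is a symmetric `2 × 2` integer matrix with `Q₁₁ = d`, `d` nonzero
and square-free, and the row vector `(m, n)` with `m, n` coprime annihilates
`Q`, then `n = ±1` and `Q` is congruent over `ℤ` to `diag(d, 0)`. -/
theorem radical_vector_normalization (d m n : ℤ) (hd : d ≠ 0)
    (hsf : Squarefree d)
    (Q : Matrix (Fin 2) (Fin 2) ℤ) (hsym : Q.IsSymm)
    (h11 : Q 0 0 = d) (hmn : IsCoprime m n)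
    (h1 : m * Q 0 0 + n * Q 1 0 = 0)
    (h2 : m * Q 0 1 + n * Q 1 1 = 0) :
    (n = 1 ∨ n = -1) ∧
      ∃ U : Matrix (Fin 2) (Fin 2) ℤ,
        (U.det = 1 ∨ U.det = -1) ∧ U.transpose * Q * U = !![d, 0; 0, 0] :=
  radical_vector_normalization_general d m n hsf Q hsym h11 hmn h1 h2
end

section
/- Let F₀ ∈ ℂ[x₀,x₁,x₂,x₃] be a homogeneous polynomial of degree 3 such that the singular points of F₀ in ℂ⁴ ∖ {0} are exactly the nonzero scalar multiples of (1,0,0,0). Suppose moreover that the three affine plane curves defined by F₀(0,1,x₂,x₃) ∈ ℂ[x₂,x₃], F₀(0,x₁,1,x₃) ∈ ℂ[x₁,x₃], and F₀(0,x₁,x₂,1) ∈ ℂ[x₁,x₂] are all smooth. Let F = F₀ + x₀x₄² ∈ ℂ[x₀,x₁,x₂,x₃,x₄]. Then the singular points of F in ℂ⁵ ∖ {0} are exactly the nonzero scalar multiples of (1,0,0,0,0). -/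
/-
At a singular point `z` of `F = F₀ + x₀x₄²` we have `∂₄F = 2x₀x₄ = 0`, `∂ᵢF₀ = 0` for
`i = 1, 2, 3` and `∂₀F₀ = -x₄²` at `z' = (z₀, …, z₃)`. Suppose `z₄ ≠ 0`. Then `z₀ = 0`, and Euler's
identity puts `z'` on `F₀ = 0`, so `(z₁ : z₂ : z₃)` is a singular point of the plane cubic
`F₀(0, x₁, x₂, x₃)` unless `z' = 0`; the latter is excluded because `∂₀F₀`, being homogeneous of positive degree,
vanishes at the origin while `z₄² ≠ 0`. A singular point of the plane cubic lies in one of its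
three standard affine charts, which are smooth by hypothesis. Hence `z₄ = 0`, and then `z'` is a
singular point of `F₀`.
-/

open MvPolynomial

/-- An affine plane curve defined by `g ∈ ℂ[u,v]` is smooth if there is no
point `p ∈ ℂ²` where `g` and both of its partial derivatives vanish. -/
def IsSmoothAffineCurve (g : MvPolynomial (Fin 2) ℂ) : Prop :=
  ¬ ∃ p : Fin 2 → ℂ,
    eval p g = 0 ∧ ∀ i : Fin 2, eval p (pderiv i g) = 0

namespace MvPolynomial

variable {R σ : Type*} [CommSemiring R]

theorem IsHomogeneous.eval_smul {φ : MvPolynomial σ R} {n : ℕ} (h : φ.IsHomogeneous n) (c : R)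
    (z : σ → R) : eval (c • z) φ = c ^ n * eval z φ := by
  rw [eval_eq, eval_eq, Finset.mul_sum]
  refine Finset.sum_congr rfl fun d hd => ?_
  have hdeg : ∑ i ∈ d.support, d i = n := by
    rw [← h (mem_support_iff.mp hd), Finsupp.weight_apply, Finsupp.sum]
    simp
  simp_rw [Pi.smul_apply, smul_eq_mul, mul_pow, Finset.prod_mul_distrib,
    Finset.prod_pow_eq_pow_sum, hdeg]
  ring

theorem IsHomogeneous.eval_zero {φ : MvPolynomial σ R} {n : ℕ} (h : φ.IsHomogeneous n)
    (hn : n ≠ 0) : eval 0 φ = 0 := by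
  simpa [zero_pow hn] using h.eval_smul 0 0

theorem IsHomogeneous.sum_mul_eval_pderiv [Fintype σ] {φ : MvPolynomial σ R} {n : ℕ}
    (h : φ.IsHomogeneous n) (z : σ → R) : ∑ i, z i * eval z (pderiv i φ) = n * eval z φ := by
  simpa using congrArg (eval z) h.sum_X_mul_pderiv

theorem eval_aeval {τ : Type*} (f : σ → MvPolynomial τ R) (q : MvPolynomial σ R) (p : τ → R) :
    eval p (aeval f q) = eval (fun k => eval p (f k)) q := by
  rw [aeval_def, algebraMap_eq, ← eval_assoc]
  rfl

theorem pderiv_aeval {τ : Type*} [Fintype σ] (f : σ → MvPolynomial τ R) (q : MvPolynomial σ R)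
    (i : τ) : pderiv i (aeval f q) = ∑ j, aeval f (pderiv j q) * pderiv i (f j) := by
  classical
  induction q using MvPolynomial.induction_on with
  | C a => simp
  | add p q hp hq => simp only [map_add, hp, hq, add_mul, Finset.sum_add_distrib]
  | mul_X p k hp =>
    rw [map_mul, aeval_X, Derivation.leibniz, hp]
    simp only [Derivation.leibniz, pderiv_X, map_add, map_mul, smul_eq_mul, aeval_X, add_mul,
      Finset.sum_add_distrib, Pi.single_apply, mul_ite, mul_one, mul_zero, apply_ite (aeval f),
      map_zero, ite_mul, zero_mul, Finset.sum_ite_eq, Finset.mem_univ, if_true, Finset.mul_sum,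
      mul_assoc]

end MvPolynomial

section Stabilize

variable {R : Type*} [CommRing R] {n : ℕ}

noncomputable def stabilize (F₀ : MvPolynomial (Fin n) R) : MvPolynomial (Fin (n + 1)) R :=
  rename Fin.castSucc F₀ + X 0 * X (Fin.last n) ^ 2

variable [NeZero n]

theorem pderiv_castSucc_stabilize (F₀ : MvPolynomial (Fin n) R) (i : Fin n) :
    pderiv i.castSucc (stabilize F₀) =
      rename Fin.castSucc (pderiv i F₀) + if i = 0 then X (Fin.last n) ^ 2 else 0 := by
  rw [stabilize, map_add, pderiv_rename (Fin.castSucc_injective n), pderiv_mul, pderiv_pow,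
    pderiv_X_of_ne (Fin.castSucc_ne_last i).symm]
  split_ifs with hi
  · subst hi; simp
  · rw [pderiv_X_of_ne (by simpa [eq_comm] using hi)]; simp

theorem pderiv_last_stabilize (F₀ : MvPolynomial (Fin n) R) :
    pderiv (Fin.last n) (stabilize F₀) = 2 * X 0 * X (Fin.last n) := by
  have hF₀ : pderiv (Fin.last n) (rename Fin.castSucc F₀) = 0 := by
    apply pderiv_eq_zero_of_notMem_vars
    intro hmem
    obtain ⟨j, -, hj⟩ := Finset.mem_image.mp (vars_rename _ _ hmem)
    exact Fin.castSucc_ne_last j hj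
  rw [stabilize, map_add, hF₀, pderiv_mul, pderiv_pow, pderiv_X_self,
    pderiv_X_of_ne (by simpa using Fin.castSucc_ne_last (0 : Fin n))]
  ring

theorem forall_eval_pderiv_stabilize_snoc_zero_iff (F₀ : MvPolynomial (Fin n) R)
    (w : Fin n → R) :
    (∀ i, eval (Fin.snoc w 0) (pderiv i (stabilize F₀)) = 0) ↔
      ∀ i, eval w (pderiv i F₀) = 0 := by
  simp [Fin.forall_fin_succ', pderiv_castSucc_stabilize, pderiv_last_stabilize, eval_rename,
    Fin.snoc_comp_castSucc, apply_ite (eval _)]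

end Stabilize

theorem snoc_zero_smul_ite_eq_zero {R : Type*} [Semiring R] {n : ℕ} (c : R) :
    (Fin.snoc (c • fun j : Fin (n + 1) => if j = 0 then (1 : R) else 0) 0 : Fin (n + 2) → R) =
      c • fun j => if j = 0 then 1 else 0 := by
  funext j
  induction j using Fin.lastCases <;> simp

theorem not_isSmoothAffineCurve_aeval {σ : Type*} [Fintype σ] {q : MvPolynomial σ ℂ}
    {f : σ → MvPolynomial (Fin 2) ℂ} {w : σ → ℂ} (p : Fin 2 → ℂ)
    (hp : ∀ k, eval p (f k) = w k) (hq : eval w q = 0)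
    (hcrit : ∀ k, eval w (pderiv k q) = 0 ∨ ∀ i, pderiv i (f k) = 0) :
    ¬ IsSmoothAffineCurve (aeval f q) := by
  have hw : (fun k => eval p (f k)) = w := funext hp
  refine not_not_intro ⟨p, by rw [eval_aeval, hw, hq], fun i => ?_⟩
  rw [pderiv_aeval, map_sum]
  refine Finset.sum_eq_zero fun k _ => ?_
  rw [eval_mul, eval_aeval, hw]
  rcases hcrit k with h | h
  · rw [h, zero_mul]
  · rw [h i, map_zero, mul_zero]

theorem eq_zero_of_isSmoothAffineCurve_charts {F₀ : MvPolynomial (Fin 4) ℂ} {n : ℕ}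
    (hdeg : F₀.IsHomogeneous n) (hn : n ≠ 0)
    (hc1 : IsSmoothAffineCurve (aeval ![0, 1, X 0, X 1] F₀))
    (hc2 : IsSmoothAffineCurve (aeval ![0, X 0, 1, X 1] F₀))
    (hc3 : IsSmoothAffineCurve (aeval ![0, X 0, X 1, 1] F₀))
    {w : Fin 4 → ℂ} (hw0 : w 0 = 0) (hw : ∀ i ≠ 0, eval w (pderiv i F₀) = 0) : w = 0 := by
  have hF : eval w F₀ = 0 := by
    have hterm : ∀ i, w i * eval w (pderiv i F₀) = 0 := fun i => by
      rcases eq_or_ne i 0 with rfl | hi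
      · rw [hw0, zero_mul]
      · rw [hw i hi, mul_zero]
    simpa [hterm, hn] using (hdeg.sum_mul_eval_pderiv w).symm
  by_contra hne
  obtain ⟨j, hj⟩ : ∃ j, w j ≠ 0 := Function.ne_iff.mp hne
  set v := (w j)⁻¹ • w with hv
  have hv0 : v 0 = 0 := by simp [hv, hw0]
  have hvj : v j = 1 := by simp [hv, hj]
  have hvF : eval v F₀ = 0 := by rw [hv, hdeg.eval_smul, hF, mul_zero]
  have hvD : ∀ i ≠ 0, eval v (pderiv i F₀) = 0 := fun i hi => by
    rw [hv, hdeg.pderiv.eval_smul, hw i hi, mul_zero]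
  -- `v` is a singular point of the plane cubic `F₀(0, x₁, x₂, x₃)` in its affine chart `xⱼ = 1`.
  fin_cases j
  · exact hj hw0
  · exact not_isSmoothAffineCurve_aeval ![v 2, v 3]
      (fun k => by fin_cases k <;> simp [hv0, ← hvj]) hvF
      (fun k => by fin_cases k <;> simp [hvD]) hc1
  · exact not_isSmoothAffineCurve_aeval ![v 1, v 3]
      (fun k => by fin_cases k <;> simp [hv0, ← hvj]) hvF
      (fun k => by fin_cases k <;> simp [hvD]) hc2
  · exact not_isSmoothAffineCurve_aeval ![v 1, v 2]
      (fun k => by fin_cases k <;> simp [hv0, ← hvj]) hvF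
      (fun k => by fin_cases k <;> simp [hvD]) hc3

theorem last_eq_zero_of_forall_eval_pderiv_stabilize {F₀ : MvPolynomial (Fin 4) ℂ} {n : ℕ}
    (hdeg : F₀.IsHomogeneous n) (hn : 2 ≤ n)
    (hc1 : IsSmoothAffineCurve (aeval ![0, 1, X 0, X 1] F₀))
    (hc2 : IsSmoothAffineCurve (aeval ![0, X 0, 1, X 1] F₀))
    (hc3 : IsSmoothAffineCurve (aeval ![0, X 0, X 1, 1] F₀))
    {z : Fin 5 → ℂ} (hz : ∀ i, eval z (pderiv i (stabilize F₀)) = 0) : z (Fin.last 4) = 0 := by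
  by_contra hlast
  have hz0 : z 0 = 0 := by
    have h := hz (Fin.last 4)
    rw [pderiv_last_stabilize, eval_mul, eval_mul, eval_X, eval_X] at h
    simpa using (mul_eq_zero.mp h).resolve_right hlast
  have hcast : ∀ i, eval (z ∘ Fin.castSucc) (pderiv i F₀) +
      (if i = 0 then z (Fin.last 4) ^ 2 else 0) = 0 := fun i => by
    simpa [pderiv_castSucc_stabilize, eval_rename, apply_ite (eval z)] using hz i.castSucc
  have hinit : z ∘ Fin.castSucc = 0 :=
    eq_zero_of_isSmoothAffineCurve_charts hdeg (by omega) hc1 hc2 hc3 hz0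
      fun i hi => by simpa [hi] using hcast i
  have hlast_sq := hcast 0
  rw [hinit, hdeg.pderiv.eval_zero (by omega)] at hlast_sq
  exact hlast (by simpa using hlast_sq)

/-- Stabilization lemma: if `F₀ ∈ ℂ[x₀,x₁,x₂,x₃]` is a homogeneous cubic whose
singular points in `ℂ⁴ ∖ {0}` are exactly the nonzero multiples of
`(1,0,0,0)`, and the affine curves `F₀(0,1,x₂,x₃)`, `F₀(0,x₁,1,x₃)`,
`F₀(0,x₁,x₂,1)` are smooth, then the singular points of
`F = F₀ + x₀x₄² ∈ ℂ[x₀,…,x₄]` in `ℂ⁵ ∖ {0}` are exactly the nonzero multiples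
of `(1,0,0,0,0)`. -/
theorem stabilization_unique_singularity
    (F₀ : MvPolynomial (Fin 4) ℂ) (hdeg : F₀.IsHomogeneous 3)
    (hsing : {z : Fin 4 → ℂ | z ≠ 0 ∧ ∀ i : Fin 4, eval z (pderiv i F₀) = 0} =
      {z : Fin 4 → ℂ | ∃ c : ℂ, c ≠ 0 ∧
        z = c • fun j : Fin 4 => if j = 0 then (1 : ℂ) else 0})
    (hc1 : IsSmoothAffineCurve
      (aeval ![0, 1, X 0, X 1] F₀ : MvPolynomial (Fin 2) ℂ))
    (hc2 : IsSmoothAffineCurve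
      (aeval ![0, X 0, 1, X 1] F₀ : MvPolynomial (Fin 2) ℂ))
    (hc3 : IsSmoothAffineCurve
      (aeval ![0, X 0, X 1, 1] F₀ : MvPolynomial (Fin 2) ℂ))
    (F : MvPolynomial (Fin 5) ℂ)
    (hF : F = rename Fin.castSucc F₀ + X 0 * X 4 ^ 2) :
    {z : Fin 5 → ℂ | z ≠ 0 ∧ ∀ i : Fin 5, eval z (pderiv i F) = 0} =
      {z : Fin 5 → ℂ | ∃ c : ℂ, c ≠ 0 ∧
        z = c • fun j : Fin 5 => if j = 0 then (1 : ℂ) else 0} := by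
  obtain rfl : F = stabilize F₀ := hF
  ext z
  constructor
  · rintro ⟨hz, hcrit⟩
    have hsnoc : Fin.snoc (Fin.init z) 0 = z := by
      rw [← last_eq_zero_of_forall_eval_pderiv_stabilize hdeg (by norm_num) hc1 hc2 hc3 hcrit]
      exact Fin.snoc_init_self z
    rw [← hsnoc, forall_eval_pderiv_stabilize_snoc_zero_iff] at hcrit
    have hmem : Fin.init z ∈ {w : Fin 4 → ℂ | w ≠ 0 ∧ ∀ i, eval w (pderiv i F₀) = 0} := by
      refine ⟨fun h => hz ?_, hcrit⟩
      rw [← hsnoc, h]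
      exact Fin.snoc_init_self 0
    rw [hsing] at hmem
    obtain ⟨c, hc, hcz⟩ := hmem
    exact ⟨c, hc, by rw [← hsnoc, hcz, snoc_zero_smul_ite_eq_zero]⟩
  · rintro ⟨c, hc, rfl⟩
    have hmem : (c • fun j : Fin 4 => if j = 0 then (1 : ℂ) else 0) ∈
        {w | w ≠ 0 ∧ ∀ i, eval w (pderiv i F₀) = 0} := by
      rw [hsing]
      exact ⟨c, hc, rfl⟩
    refine ⟨smul_ne_zero hc fun h => by simpa using congrFun h 0, ?_⟩
    rw [← snoc_zero_smul_ite_eq_zero, forall_eval_pderiv_stabilize_snoc_zero_iff]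
    exact hmem.2
end

section
/- Let a, b ∈ ℂ be nonzero and let F₀ = x₀x₁x₂ + x₁x₃(x₁ + a·x₃) + b·x₂³ ∈ ℂ[x₀,x₁,x₂,x₃]. Then the three affine plane curves defined by F₀(0,1,x₂,x₃) = x₃(1 + a·x₃) + b·x₂³ ∈ ℂ[x₂,x₃], F₀(0,x₁,1,x₃) = x₁x₃(x₁ + a·x₃) + b ∈ ℂ[x₁,x₃], and F₀(0,x₁,x₂,1) = x₁(x₁ + a) + b·x₂³ ∈ ℂ[x₁,x₂] are all smooth. -/
open MvPolynomial

/-- By Euler's identity `∑ Xᵢ ∂ᵢφ = n φ`, a singular point of `φ + b` is a zero of `φ`,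
so `b = 0` there. -/
theorem isSmoothAffineCurve_add_C_of_isHomogeneous {φ : MvPolynomial (Fin 2) ℂ} {n : ℕ}
    (hφ : φ.IsHomogeneous n) (hn : n ≠ 0) {b : ℂ} (hb : b ≠ 0) :
    IsSmoothAffineCurve (φ + C b) := by
  rintro ⟨p, hzero, hcrit⟩
  simp only [map_add, pderiv_C, add_zero] at hzero hcrit
  have hEuler := congrArg (eval p) hφ.sum_X_mul_pderiv
  simp only [map_sum, map_mul, eval_X, hcrit, mul_zero, Finset.sum_const_zero,
    nsmul_eq_mul] at hEuler
  have hφp : eval p φ = 0 := by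
    simpa [hn] using hEuler.symm
  exact hb (by simpa [hφp] using hzero)

/-- At a singular point `(w, t)` of `g = w (c + d w) + b t³` one has
`c² = (c + 2dw) ∂_w g - 4d g + (4d/3) t ∂_t g = 0`. -/
theorem isSmoothAffineCurve_X_mul_add_C_mul_X_pow_three {i j : Fin 2} (hij : i ≠ j)
    {c : ℂ} (hc : c ≠ 0) (d b : ℂ) :
    IsSmoothAffineCurve (X i * (C c + C d * X i) + C b * X j ^ 3) := by
  rintro ⟨p, hzero, hcrit⟩
  have hi := hcrit i
  have hj := hcrit j
  simp only [map_add, map_mul, map_pow, pderiv_X, pderiv_C, pderiv_mul, pderiv_pow,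
    Pi.single_eq_same, Pi.single_eq_of_ne hij, Pi.single_eq_of_ne hij.symm, eval_X, eval_C,
    map_ofNat, map_one, mul_zero, zero_mul, mul_one, add_zero, zero_add,
    Nat.cast_ofNat] at hzero hi hj
  have hc2 : c ^ 2 = 0 := by
    linear_combination (c + 2 * d * p i) * hi - 4 * d * hzero + (4 * d / 3) * p j * hj
  exact hc (pow_eq_zero_iff two_ne_zero |>.mp hc2)

/-- For `F₀ = x₀x₁x₂ + x₁x₃(x₁ + a x₃) + b x₂³` with `a, b ≠ 0`, the three
affine plane curves `F₀(0,1,x₂,x₃) = x₃(1 + a x₃) + b x₂³`,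
`F₀(0,x₁,1,x₃) = x₁x₃(x₁ + a x₃) + b`, `F₀(0,x₁,x₂,1) = x₁(x₁ + a) + b x₂³`
are all smooth.  (Variables `u, v` are `X 0, X 1` in each case.) -/
theorem cubic_family_one_smooth_sections (a b : ℂ) (ha : a ≠ 0) (hb : b ≠ 0) :
    IsSmoothAffineCurve
      (X 1 * (1 + C a * X 1) + C b * X 0 ^ 3 : MvPolynomial (Fin 2) ℂ) ∧
    IsSmoothAffineCurve
      (X 0 * X 1 * (X 0 + C a * X 1) + C b : MvPolynomial (Fin 2) ℂ) ∧
    IsSmoothAffineCurve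
      (X 0 * (X 0 + C a) + C b * X 1 ^ 3 : MvPolynomial (Fin 2) ℂ) := by
  refine ⟨?_, ?_, ?_⟩
  · simpa only [map_one] using
      isSmoothAffineCurve_X_mul_add_C_mul_X_pow_three (i := 1) (j := 0) (by decide) one_ne_zero a b
  · have hcubic : (X 0 * X 1 * (X 0 + C a * X 1) : MvPolynomial (Fin 2) ℂ).IsHomogeneous 3 :=
      ((isHomogeneous_X ℂ 0).mul (isHomogeneous_X ℂ 1)).mul
        ((isHomogeneous_X ℂ 0).add (isHomogeneous_C_mul_X a 1))
    exact isSmoothAffineCurve_add_C_of_isHomogeneous hcubic three_ne_zero hb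
  · simpa only [map_one, one_mul, add_comm (C a)] using
      isSmoothAffineCurve_X_mul_add_C_mul_X_pow_three (i := 0) (j := 1) (by decide) ha 1 b
end

section
/- Let a, b ∈ ℂ be nonzero and let F = x₀(x₄² + x₁x₂) + x₁x₃(x₁ + a·x₃) + b·x₂³ ∈ ℂ[x₀,x₁,x₂,x₃,x₄]. Then the set of points z ∈ ℂ⁵ ∖ {0} at which all five partial derivatives of F vanish is exactly the set of nonzero scalar multiples of (1,0,0,0,0). -/
/-!
At a singular point `∂₃F = x₁(x₁ + 2a x₃)` vanishes. If `x₁ ≠ 0`, then `x₁ = -2a x₃` with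
`x₃ ≠ 0`, so `∂₁F = 0` gives `x₀x₂ = 3a x₃² ≠ 0`; then `∂₄F = 2x₀x₄` forces `x₄ = 0`, and
`∂₀F = x₄² + x₁x₂` forces `x₁x₂ = 0`, a contradiction. Once `x₁ = 0`, the derivatives
`∂₂F`, `∂₁F`, `∂₀F` reduce to `3b x₂²`, `a x₃²`, `x₄²`, leaving only the `x₀`-axis.
-/

open MvPolynomial

section Gradient

variable {R : Type*} [CommRing R]

def cubicGradient (a b : R) (x : Fin 5 → R) : Fin 5 → R :=
  ![x 4 ^ 2 + x 1 * x 2,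
    x 0 * x 2 + 2 * x 1 * x 3 + a * x 3 ^ 2,
    x 0 * x 1 + 3 * b * x 2 ^ 2,
    x 1 ^ 2 + 2 * a * x 1 * x 3,
    2 * x 0 * x 4]

theorem eval_pderiv_cubic (a b : R) (x : Fin 5 → R) (i : Fin 5) :
    eval x (pderiv i (X 0 * (X 4 ^ 2 + X 1 * X 2) + X 1 * X 3 * (X 1 + C a * X 3) +
      C b * X 2 ^ 3)) = cubicGradient a b x i := by
  fin_cases i <;> simp [cubicGradient, pderiv_X] <;> ring

end Gradient

section Critical

variable {K : Type*} [Field K]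

theorem critical_point_of_cubic {a b x₀ x₁ x₂ x₃ x₄ : K} (two_ne : (2 : K) ≠ 0)
    (three_ne : (3 : K) ≠ 0) (ha : a ≠ 0) (hb : b ≠ 0)
    (h₀ : x₄ ^ 2 + x₁ * x₂ = 0) (h₁ : x₀ * x₂ + 2 * x₁ * x₃ + a * x₃ ^ 2 = 0)
    (h₂ : x₀ * x₁ + 3 * b * x₂ ^ 2 = 0) (h₃ : x₁ ^ 2 + 2 * a * x₁ * x₃ = 0)
    (h₄ : 2 * x₀ * x₄ = 0) :
    x₁ = 0 ∧ x₂ = 0 ∧ x₃ = 0 ∧ x₄ = 0 := by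
  have hx₁ : x₁ = 0 := by
    by_contra hx₁
    have hsum : x₁ + 2 * a * x₃ = 0 :=
      (mul_eq_zero.mp (by linear_combination h₃ : x₁ * (x₁ + 2 * a * x₃) = 0)).resolve_left hx₁
    have hx₃ : x₃ ≠ 0 := by
      rintro rfl
      exact hx₁ (by linear_combination hsum)
    have hx₀x₂ : x₀ * x₂ ≠ 0 := by
      rw [show x₀ * x₂ = 3 * a * x₃ ^ 2 by linear_combination h₁ - 2 * x₃ * hsum]
      exact mul_ne_zero (mul_ne_zero three_ne ha) (pow_ne_zero _ hx₃)
    have hx₄ : x₄ = 0 := by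
      simpa [two_ne, left_ne_zero_of_mul hx₀x₂] using h₄
    have hx₁x₂ : x₁ * x₂ = 0 := by linear_combination h₀ - x₄ * hx₄
    exact mul_ne_zero hx₁ (right_ne_zero_of_mul hx₀x₂) hx₁x₂
  subst hx₁
  have hx₂ : x₂ = 0 := by simpa [three_ne, hb] using h₂
  subst hx₂
  exact ⟨rfl, rfl, by simpa [ha] using h₁, by simpa using h₀⟩

theorem cubicGradient_eq_zero_iff {a b : K} (two_ne : (2 : K) ≠ 0) (three_ne : (3 : K) ≠ 0)
    (ha : a ≠ 0) (hb : b ≠ 0) (x : Fin 5 → K) :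
    cubicGradient a b x = 0 ↔ ∀ j ≠ 0, x j = 0 := by
  constructor
  · intro h
    obtain ⟨h₀, h₁, h₂, h₃, h₄⟩ : x 4 ^ 2 + x 1 * x 2 = 0 ∧
        x 0 * x 2 + 2 * x 1 * x 3 + a * x 3 ^ 2 = 0 ∧ x 0 * x 1 + 3 * b * x 2 ^ 2 = 0 ∧ x 1 ^ 2 + 2 * a * x 1 * x 3 = 0 ∧ 2 * x 0 * x 4 = 0 := by
      simpa [cubicGradient, funext_iff, Fin.forall_fin_succ] using h
    obtain ⟨hx₁, hx₂, hx₃, hx₄⟩ := critical_point_of_cubic two_ne three_ne ha hb h₀ h₁ h₂ h₃ h₄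
    intro j hj
    fin_cases j <;> trivial
  · intro h
    simp [cubicGradient, funext_iff, Fin.forall_fin_succ, h 1, h 2, h 3, h 4]

end Critical

theorem exists_smul_indicator_iff {ι R : Type*} [DecidableEq ι] [Semiring R] [Nontrivial R]
    (i₀ : ι) (z : ι → R) :
    (∃ c : R, c ≠ 0 ∧ z = c • fun j => if j = i₀ then (1 : R) else 0) ↔
      z ≠ 0 ∧ ∀ j ≠ i₀, z j = 0 := by
  constructor
  · rintro ⟨c, hc, rfl⟩
    exact ⟨fun h => hc (by simpa using congrFun h i₀), fun j hj => by simp [hj]⟩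
  · rintro ⟨hz, hzero⟩
    have hz₀ : z i₀ ≠ 0 := by
      refine fun h => hz (funext fun j => ?_)
      by_cases hj : j = i₀
      · simp [hj, h]
      · simp [hzero j hj]
    refine ⟨z i₀, hz₀, funext fun j => ?_⟩
    by_cases hj : j = i₀ <;> simp [hj, hzero]

/-- For the cubic `F = x₀(x₄² + x₁x₂) + x₁x₃(x₁ + a x₃) + b x₂³` with
`a, b ≠ 0`, the points of `ℂ⁵ ∖ {0}` where all five partial derivatives of `F`
vanish are exactly the nonzero scalar multiples of `(1,0,0,0,0)`. -/
theorem cubic_family_one_unique_singularity (a b : ℂ) (ha : a ≠ 0)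
    (hb : b ≠ 0) (F : MvPolynomial (Fin 5) ℂ)
    (hF : F = X 0 * (X 4 ^ 2 + X 1 * X 2) + X 1 * X 3 * (X 1 + C a * X 3) +
      C b * X 2 ^ 3) :
    {z : Fin 5 → ℂ | z ≠ 0 ∧ ∀ i : Fin 5, eval z (pderiv i F) = 0} =
      {z : Fin 5 → ℂ | ∃ c : ℂ, c ≠ 0 ∧
        z = c • fun j : Fin 5 => if j = 0 then (1 : ℂ) else 0} := by
  ext z
  subst hF
  rw [Set.mem_ofPred_eq, Set.mem_ofPred_eq, exists_smul_indicator_iff,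
    ← cubicGradient_eq_zero_iff two_ne_zero three_ne_zero ha hb, funext_iff]
  simp only [eval_pderiv_cubic, Pi.zero_apply]
end

section
/- Let a, b ∈ ℂ be nonzero and let F = x₀(x₂² − x₁x₃) + a·x₁³ + b·x₃³ + x₁x₄² ∈ ℂ[x₀,x₁,x₂,x₃,x₄]. Then the set of points z ∈ ℂ⁵ ∖ {0} at which all five partial derivatives of F vanish is exactly the set of nonzero scalar multiples of (1,0,0,0,0). -/
/-!
The partial derivatives of `F` are `x₂² − x₁x₃`, `3a x₁² + x₄² − x₀x₃`, `2x₀x₂`,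
`3b x₃² − x₀x₁` and `2x₁x₄`. On their common zero set,
`3b x₃³ = x₀x₁x₃ = x₀x₂² = 0`, so `x₃ = 0`; then `x₂² = x₁x₃ = 0`,
`3a x₁³ = x₁(x₀x₃ − x₄²) = 0` and finally `x₄² = x₀x₃ − 3a x₁² = 0`.
-/

open MvPolynomial

section

variable {R : Type*} [CommRing R]

noncomputable def cubicFamilyTwo (a b : R) : MvPolynomial (Fin 5) R :=
  X 0 * (X 2 ^ 2 - X 1 * X 3) + C a * X 1 ^ 3 + C b * X 3 ^ 3 + X 1 * X 4 ^ 2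

theorem eval_pderiv_cubicFamilyTwo (a b : R) (z : Fin 5 → R) :
    (fun i => eval z (pderiv i (cubicFamilyTwo a b))) =
      ![z 2 ^ 2 - z 1 * z 3, 3 * a * z 1 ^ 2 + z 4 ^ 2 - z 0 * z 3, 2 * z 0 * z 2,
        3 * b * z 3 ^ 2 - z 0 * z 1, 2 * z 1 * z 4] := by
  funext i
  fin_cases i <;> simp [cubicFamilyTwo, pderiv_X] <;> ring

variable [NoZeroDivisors R]

theorem pderiv_cubicFamilyTwo_eval_eq_zero_iff [NeZero (2 : R)] (a b : R) (z : Fin 5 → R) :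
    (∀ i, eval z (pderiv i (cubicFamilyTwo a b)) = 0) ↔
      z 2 ^ 2 = z 1 * z 3 ∧ 3 * a * z 1 ^ 2 + z 4 ^ 2 = z 0 * z 3 ∧ z 0 * z 2 = 0 ∧
        3 * b * z 3 ^ 2 = z 0 * z 1 ∧ z 1 * z 4 = 0 := by
  have hgrad := congrFun (eval_pderiv_cubicFamilyTwo a b z)
  simp only [Fin.forall_fin_succ, IsEmpty.forall_iff, hgrad, Matrix.cons_val_zero,
    Matrix.cons_val_succ, sub_eq_zero, mul_assoc, mul_eq_zero, two_ne_zero, false_or, and_true]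

theorem eq_zero_of_cubicFamilyTwo_relations {α β : R} (hα : α ≠ 0) (hβ : β ≠ 0)
    {x : Fin 5 → R} (h₀ : x 2 ^ 2 = x 1 * x 3) (h₁ : α * x 1 ^ 2 + x 4 ^ 2 = x 0 * x 3)
    (h₂ : x 0 * x 2 = 0) (h₃ : β * x 3 ^ 2 = x 0 * x 1) (h₄ : x 1 * x 4 = 0) :
    x 1 = 0 ∧ x 2 = 0 ∧ x 3 = 0 ∧ x 4 = 0 := by
  have hx₃ : x 3 = 0 := by
    have : β * x 3 ^ 3 = 0 := by linear_combination x 2 * h₂ - x 0 * h₀ + x 3 * h₃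
    simpa [hβ] using this
  have hx₂ : x 2 = 0 := by simpa [hx₃] using h₀
  have hx₁ : x 1 = 0 := by
    have : α * x 1 ^ 3 = 0 := by linear_combination x 0 * x 1 * hx₃ + x 1 * h₁ - x 4 * h₄
    simpa [hα] using this
  have hx₄ : x 4 = 0 := by simpa [hx₁, hx₃] using h₁
  exact ⟨hx₁, hx₂, hx₃, hx₄⟩

end

/-- For the cubic `F = x₀(x₂² − x₁x₃) + a x₁³ + b x₃³ + x₁x₄²` with
`a, b ≠ 0`, the points of `ℂ⁵ ∖ {0}` where all five partial derivatives of `F`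
vanish are exactly the nonzero scalar multiples of `(1,0,0,0,0)`. -/
theorem cubic_family_two_unique_singularity (a b : ℂ) (ha : a ≠ 0)
    (hb : b ≠ 0) (F : MvPolynomial (Fin 5) ℂ)
    (hF : F = X 0 * (X 2 ^ 2 - X 1 * X 3) + C a * X 1 ^ 3 + C b * X 3 ^ 3 +
      X 1 * X 4 ^ 2) :
    {z : Fin 5 → ℂ | z ≠ 0 ∧ ∀ i : Fin 5, eval z (pderiv i F) = 0} =
      {z : Fin 5 → ℂ | ∃ c : ℂ, c ≠ 0 ∧
        z = c • fun j : Fin 5 => if j = 0 then (1 : ℂ) else 0} := by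
  replace hF : F = cubicFamilyTwo a b := hF
  ext z
  simp only [Set.mem_ofPred_eq, hF, pderiv_cubicFamilyTwo_eval_eq_zero_iff]
  constructor
  · rintro ⟨hz, h₀, h₁, h₂, h₃, h₄⟩
    obtain ⟨hz₁, hz₂, hz₃, hz₄⟩ := eq_zero_of_cubicFamilyTwo_relations
      (mul_ne_zero three_ne_zero ha) (mul_ne_zero three_ne_zero hb) h₀ h₁ h₂ h₃ h₄
    have hz_eq : z = z 0 • fun j : Fin 5 => if j = 0 then (1 : ℂ) else 0 := by
      funext j
      fin_cases j <;> simp [hz₁, hz₂, hz₃, hz₄]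
    refine ⟨z 0, fun hz₀ => hz ?_, hz_eq⟩
    rw [hz_eq, hz₀, zero_smul]
  · rintro ⟨c, hc, rfl⟩
    refine ⟨fun h => hc (by simpa using congrFun h 0), ?_⟩
    simp
end
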